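/- Let a, b : [0,T] → [0,∞) be integrable with b continuous, and suppose b(t) ≤ C₁ ∫₀ᵗ b(s) ds + C₂ ∫₀ᵗ √(b(s)) · √(sup_{r ≤ s} b(r)) ds for all t, where C₁, C₂ ≥ 0. If b is bounded on [0,T] and b(0) = 0, then sup_{t ≤ T} b(t) ≤ (C₁ + C₂) ∫₀ᵀ sup_{r ≤ s} b(r) ds, and consequently b ≡ 0 on [0,T]. -/

import Mathlib

/-!
Let `S t = sup_{r ≤ t} b r` be the running supremum of `b`. Since `√(b s) ≤ √(S s)`, both
integrals in the hypothesis are dominated by `∫₀ᵗ S`, and taking suprema gives the integral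
Gronwall inequality `S t ≤ K ∫₀ᵗ S` with `K = C₁ (1 + C₂ T)`; the factor `T` appears because
in `hineq` the second integral is part of the integrand of the first. Iterating,
`S t ≤ S T (K t)ⁿ / n! → 0`, so `S`, and with it `b`, vanishes on `[0, T]`, which makes the
first claim `0 ≤ 0`.
-/

open Set MeasureTheory intervalIntegral

open Nat in
theorem le_mul_pow_div_factorial_of_le_mul_integral {f : ℝ → ℝ} {K M T : ℝ} (hK : 0 ≤ K)
    (hf : IntegrableOn f (Icc 0 T)) (hfM : ∀ t ∈ Icc 0 T, f t ≤ M)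
    (hfK : ∀ t ∈ Icc 0 T, f t ≤ K * ∫ s in 0..t, f s) (n : ℕ) :
    ∀ t ∈ Icc 0 T, f t ≤ M * (K * t) ^ n / n ! := by
  induction n with
  | zero => simpa using hfM
  | succ n ih =>
    intro t ht
    have hft : IntervalIntegrable f volume 0 t :=
      (intervalIntegrable_iff_integrableOn_Icc_of_le ht.1).2
        (hf.mono_set (Icc_subset_Icc_right ht.2))
    calc f t ≤ K * ∫ s in 0..t, f s := hfK t ht
      _ ≤ K * ∫ s in 0..t, M * K ^ n / n ! * s ^ n := by
        refine mul_le_mul_of_nonneg_left (integral_mono_on ht.1 hft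
          (Continuous.intervalIntegrable (by fun_prop) _ _) fun s hs => ?_) hK
        exact (ih s ⟨hs.1, hs.2.trans ht.2⟩).trans_eq (by ring)
      _ = M * (K * t) ^ (n + 1) / (n + 1)! := by
        rw [intervalIntegral.integral_const_mul, integral_pow, factorial_succ]
        push_cast
        field_simp
        ring

theorem nonpos_of_le_mul_integral {f : ℝ → ℝ} {K M T : ℝ} (hK : 0 ≤ K)
    (hf : IntegrableOn f (Icc 0 T)) (hfM : ∀ t ∈ Icc 0 T, f t ≤ M)
    (hfK : ∀ t ∈ Icc 0 T, f t ≤ K * ∫ s in 0..t, f s) :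
    ∀ t ∈ Icc 0 T, f t ≤ 0 := by
  intro t ht
  have hlim := (FloorSemiring.tendsto_pow_div_factorial_atTop (K * t)).const_mul M
  rw [mul_zero] at hlim
  refine ge_of_tendsto hlim (Filter.Eventually.of_forall fun n => ?_)
  rw [← mul_div_assoc]
  exact le_mul_pow_div_factorial_of_le_mul_integral hK hf hfM hfK n t ht

noncomputable def runningSup (b : ℝ → ℝ) (t : ℝ) : ℝ := sSup (b '' Icc 0 t)

section RunningSup

variable {b : ℝ → ℝ} {T : ℝ}

theorem le_runningSup (hb : ContinuousOn b (Icc 0 T)) {r s : ℝ} (hr : r ∈ Icc 0 s) (hs : s ≤ T) :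
    b r ≤ runningSup b s :=
  le_csSup (isCompact_Icc.bddAbove_image (hb.mono (Icc_subset_Icc_right hs)))
    (mem_image_of_mem b hr)

theorem runningSup_le {s c : ℝ} (hs : 0 ≤ s) (h : ∀ r ∈ Icc 0 s, b r ≤ c) :
    runningSup b s ≤ c :=
  csSup_le ((nonempty_Icc.2 hs).image b) (forall_mem_image.2 h)

theorem runningSup_nonneg (hb : ContinuousOn b (Icc 0 T)) (hb0 : 0 ≤ b 0) {s : ℝ}
    (hs : s ∈ Icc 0 T) : 0 ≤ runningSup b s :=
  hb0.trans (le_runningSup hb ⟨le_rfl, hs.1⟩ hs.2)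

theorem monotoneOn_runningSup (hb : ContinuousOn b (Icc 0 T)) :
    MonotoneOn (runningSup b) (Icc 0 T) := fun _ hs _ hs' hss' =>
  runningSup_le hs.1 fun _ hr => le_runningSup hb ⟨hr.1, hr.2.trans hss'⟩ hs'.2

theorem integrableOn_runningSup (hb : ContinuousOn b (Icc 0 T)) :
    IntegrableOn (runningSup b) (Icc 0 T) :=
  (monotoneOn_runningSup hb).integrableOn_isCompact isCompact_Icc

theorem le_mul_integral_runningSup (hb : ContinuousOn b (Icc 0 T)) (hb0 : 0 ≤ b 0)
    {C₁ C₂ t : ℝ} (hC₁ : 0 ≤ C₁) (hC₂ : 0 ≤ C₂) (ht : t ∈ Icc 0 T)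
    (h : b t ≤ C₁ * ∫ s in 0..t, (b s + C₂ * ∫ r in 0..t, √(b r) * √(runningSup b r))) :
    b t ≤ C₁ * (1 + C₂ * T) * ∫ s in 0..t, runningSup b s := by
  set J := ∫ r in 0..t, √(b r) * √(runningSup b r)
  set I := ∫ s in 0..t, runningSup b s
  have hsub : uIcc 0 t ⊆ Icc 0 T := uIcc_of_le ht.1 ▸ Icc_subset_Icc_right ht.2
  have hbS : ∀ s ∈ Icc 0 t, b s ≤ runningSup b s := fun s hs =>
    le_runningSup hb ⟨hs.1, le_rfl⟩ (hs.2.trans ht.2)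
  have hS_nonneg : ∀ s ∈ Icc 0 t, 0 ≤ runningSup b s := fun s hs =>
    runningSup_nonneg hb hb0 (hsub (uIcc_of_le ht.1 ▸ hs))
  have hb_int : IntervalIntegrable b volume 0 t := (hb.mono hsub).intervalIntegrable
  have hS_int : IntervalIntegrable (runningSup b) volume 0 t :=
    ((monotoneOn_runningSup hb).mono hsub).intervalIntegrable
  have hbS_int : IntervalIntegrable (fun r => √(b r) * √(runningSup b r)) volume 0 t :=
    (Real.sqrt_monotone.comp_monotoneOn ((monotoneOn_runningSup hb).mono hsub)
      ).intervalIntegrable.continuousOn_mul (hb.mono hsub).sqrt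
  have hbI : ∫ s in 0..t, b s ≤ I := integral_mono_on ht.1 hb_int hS_int hbS
  have hJ0 : 0 ≤ J := integral_nonneg ht.1 fun _ _ => by positivity
  have hJI : J ≤ I := integral_mono_on ht.1 hbS_int hS_int fun s hs =>
    calc √(b s) * √(runningSup b s) ≤ √(runningSup b s) * √(runningSup b s) := by
          gcongr; exact hbS s hs
      _ = runningSup b s := Real.mul_self_sqrt (hS_nonneg s hs)
  have hsplit : ∫ s in 0..t, (b s + C₂ * J) = (∫ s in 0..t, b s) + t * (C₂ * J) := by
    rw [integral_add hb_int intervalIntegrable_const, intervalIntegral.integral_const,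
      smul_eq_mul, sub_zero]
  calc b t ≤ C₁ * ((∫ s in 0..t, b s) + t * (C₂ * J)) := hsplit ▸ h
    _ ≤ C₁ * (I + T * (C₂ * I)) := by
      gcongr
      exacts [ht.1.trans ht.2, ht.2]
    _ = C₁ * (1 + C₂ * T) * I := by ring

theorem runningSup_le_mul_integral (hb : ContinuousOn b (Icc 0 T)) (hb0 : 0 ≤ b 0) {K t : ℝ}
    (hK : 0 ≤ K) (ht : t ∈ Icc 0 T)
    (h : ∀ r ∈ Icc 0 t, b r ≤ K * ∫ s in 0..r, runningSup b s) :
    runningSup b t ≤ K * ∫ s in 0..t, runningSup b s := by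
  have hsub : Icc 0 t ⊆ Icc 0 T := Icc_subset_Icc_right ht.2
  have hS_int : IntervalIntegrable (runningSup b) volume 0 t :=
    ((monotoneOn_runningSup hb).mono (uIcc_of_le ht.1 ▸ hsub)).intervalIntegrable
  refine runningSup_le ht.1 fun r hr => (h r hr).trans (mul_le_mul_of_nonneg_left ?_ hK)
  exact integral_mono_interval le_rfl hr.1 hr.2
    (ae_restrict_of_forall_mem measurableSet_Ioc fun s hs =>
      runningSup_nonneg hb hb0 (hsub (Ioc_subset_Icc_self hs))) hS_int

end RunningSup

theorem stmt_10_general (T : ℝ) (hT : 0 < T) (b : ℝ → ℝ)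
    (hcont : ContinuousOn b (Icc 0 T))
    (hnonneg : ∀ t ∈ Icc (0:ℝ) T, 0 ≤ b t)
    (C₁ C₂ : ℝ) (hC₁ : 0 ≤ C₁) (hC₂ : 0 ≤ C₂)
    (hineq : ∀ t ∈ Icc (0:ℝ) T, b t ≤
      C₁ * ∫ s in (0:ℝ)..t, b s
      + C₂ * ∫ s in (0:ℝ)..t, Real.sqrt (b s) * Real.sqrt (sSup (b '' Icc 0 s))) :
    (sSup (b '' Icc 0 T) ≤ (C₁ + C₂) * ∫ s in (0:ℝ)..T, sSup (b '' Icc 0 s)) ∧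
    ∀ t ∈ Icc (0:ℝ) T, b t = 0 := by
  have hb0 : 0 ≤ b 0 := hnonneg 0 ⟨le_rfl, hT.le⟩
  have hK : 0 ≤ C₁ * (1 + C₂ * T) := by positivity
  have hS_le : ∀ t ∈ Icc 0 T,
      runningSup b t ≤ C₁ * (1 + C₂ * T) * ∫ s in 0..t, runningSup b s := fun t ht =>
    runningSup_le_mul_integral hcont hb0 hK ht fun r hr =>
      le_mul_integral_runningSup hcont hb0 hC₁ hC₂ ⟨hr.1, hr.2.trans ht.2⟩
        (hineq r ⟨hr.1, hr.2.trans ht.2⟩)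
  have hS_zero : ∀ t ∈ Icc 0 T, runningSup b t = 0 := fun t ht =>
    (nonpos_of_le_mul_integral hK (integrableOn_runningSup hcont)
      (fun s hs => monotoneOn_runningSup hcont hs ⟨hT.le, le_rfl⟩ hs.2) hS_le t ht).antisymm
      (runningSup_nonneg hcont hb0 ht)
  refine ⟨?_, fun t ht => le_antisymm ?_ (hnonneg t ht)⟩
  · change runningSup b T ≤ (C₁ + C₂) * ∫ s in 0..T, runningSup b s
    rw [hS_zero T ⟨hT.le, le_rfl⟩]
    exact mul_nonneg (add_nonneg hC₁ hC₂)
      (integral_nonneg hT.le fun s hs => runningSup_nonneg hcont hb0 hs)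
  · exact (le_runningSup hcont ⟨ht.1, le_rfl⟩ ht.2).trans (hS_zero t ht).le

theorem stmt_10 (T : ℝ) (hT : 0 < T) (b : ℝ → ℝ)
    (hcont : ContinuousOn b (Icc 0 T))
    (hnonneg : ∀ t ∈ Icc (0:ℝ) T, 0 ≤ b t)
    (hint : IntegrableOn b (Icc 0 T))
    (M : ℝ) (hbdd : ∀ t ∈ Icc (0:ℝ) T, b t ≤ M)
    (hb0 : b 0 = 0)
    (C₁ C₂ : ℝ) (hC₁ : 0 ≤ C₁) (hC₂ : 0 ≤ C₂)
    (hineq : ∀ t ∈ Icc (0:ℝ) T, b t ≤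
      C₁ * ∫ s in (0:ℝ)..t, b s
      + C₂ * ∫ s in (0:ℝ)..t, Real.sqrt (b s) * Real.sqrt (sSup (b '' Icc 0 s))) :
    (sSup (b '' Icc 0 T) ≤ (C₁ + C₂) * ∫ s in (0:ℝ)..T, sSup (b '' Icc 0 s)) ∧
    ∀ t ∈ Icc (0:ℝ) T, b t = 0 :=
  stmt_10_general T hT b hcont hnonneg C₁ C₂ hC₁ hC₂ hineq
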